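/- Let G' with list assignment L, and L-colorings α and β, be obtained from a graph G by the NP-hardness construction (with any choice of (a,b)-forbidding paths of length six). If there exists an L-recoloring sequence for G' from α to β (of any length), then G is 3-colorable. -/

import Mathlib

/-- An `L`-coloring of `G`: every vertex gets a color from its list, and adjacent
vertices get different colors. -/
def IsLColoring {V : Type*} (G : SimpleGraph V) (L : V → Finset ℕ) (γ : V → ℕ) : Prop :=
  (∀ v, γ v ∈ L v) ∧ ∀ u v, G.Adj u v → γ u ≠ γ v

/-- An `L`-recoloring sequence `seq 0, …, seq ℓ` from `α` to `β`: all are `L`-colorings,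
and consecutive colorings differ on at most one vertex. -/
def IsLRecolSeq {V : Type*} (G : SimpleGraph V) (L : V → Finset ℕ) (seq : ℕ → V → ℕ)
    (ℓ : ℕ) (α β : V → ℕ) : Prop :=
  seq 0 = α ∧ seq ℓ = β ∧ (∀ i ≤ ℓ, IsLColoring G L (seq i)) ∧
  ∀ i < ℓ, ∀ u w, seq i u ≠ seq (i+1) u → seq i w ≠ seq (i+1) w → u = w

/-- The path `w_0, w_1, …, w_6` of length six. -/
def PathG7 : SimpleGraph (Fin 7) where
  Adj i j := i.val + 1 = j.val ∨ j.val + 1 = i.val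
  symm := ⟨fun _ _ h => h.symm⟩
  loopless := ⟨fun i h => by rcases h with h | h <;> omega⟩

/-- An `(a,b)`-forbidding path of length six, with end vertices `w_0 = u` and `w_6 = v`:
all lists are contained in `{1,2,3,4}`; a pair `(x,y) ∈ L(u) × L(v)` is realized by some
`L`-coloring iff `x ≠ a` or `y ≠ b` (such pairs are admissible); and from any `L`-coloring
`γ` and admissible pair `(x,y)` with `x = γ(u)` or `y = γ(v)`, one can `L`-recolor to a
coloring `δ` with `δ(u) = x`, `δ(v) = y`, recoloring every internal vertex at most once
and not recoloring `u` and `v` until the last step. -/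
def IsForbiddingPath (L : Fin 7 → Finset ℕ) (a b : ℕ) : Prop :=
  (∀ w, L w ⊆ ({1, 2, 3, 4} : Finset ℕ)) ∧
  (∀ x ∈ L 0, ∀ y ∈ L 6,
    ((x ≠ a ∨ y ≠ b) ↔ ∃ γ, IsLColoring PathG7 L γ ∧ γ 0 = x ∧ γ 6 = y)) ∧
  (∀ γ, IsLColoring PathG7 L γ → ∀ x ∈ L 0, ∀ y ∈ L 6, (x ≠ a ∨ y ≠ b) →
    (x = γ 0 ∨ y = γ 6) →
    ∃ ℓ seq δ, IsLRecolSeq PathG7 L seq ℓ γ δ ∧ δ 0 = x ∧ δ 6 = y ∧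
      (∀ w : Fin 7, w ≠ 0 → w ≠ 6 →
        ((Finset.range ℓ).filter (fun i => seq i w ≠ seq (i+1) w)).card ≤ 1) ∧
      (∀ i < ℓ, seq i 0 = γ 0 ∧ seq i 6 = γ 6))

/-- Vertices of the graph `G'` of the NP-hardness construction, built from a graph on
`Fin N` (edges of `G` are oriented as pairs `(u,v)` with `u < v`): `orig w` are the
original vertices; `x u v`, `y u v`, `z u v` are the gadget vertices `x_uv`, `y_uv`,
`z_uv`; `p j u v s` is the `s`-th internal vertex (`s ∈ {0,…,4}`) of the `j`-th
forbidding path (`j ∈ {0,…,7}`) of the gadget of edge `uv`; `A`, `B`, `C`, `D` are the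
four special vertices `a`, `b`, `c`, `d`. -/
inductive NPV (N : ℕ) : Type
  | orig : Fin N → NPV N
  | x : Fin N → Fin N → NPV N
  | y : Fin N → Fin N → NPV N
  | z : Fin N → Fin N → NPV N
  | p : Fin 8 → Fin N → Fin N → Fin 5 → NPV N
  | A : NPV N
  | B : NPV N
  | C : NPV N
  | D : NPV N
deriving DecidableEq

/-- Oriented edges of `G`: `u < v` and `uv ∈ E(G)`. -/
def OEdge {N : ℕ} (G : SimpleGraph (Fin N)) (u v : Fin N) : Prop := G.Adj u v ∧ u < v

/-- Start vertex of the `j`-th forbidding path of the gadget of edge `uv`. -/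
def fpStart {N : ℕ} (u v : Fin N) : Fin 8 → NPV N :=
  ![.orig u, .orig u, .orig u, .orig v, .orig v, .orig v, .x u v, .y u v]

/-- End vertex of the `j`-th forbidding path of the gadget of edge `uv`. -/
def fpEnd {N : ℕ} (u v : Fin N) : Fin 8 → NPV N :=
  ![.x u v, .x u v, .y u v, .x u v, .x u v, .y u v, .z u v, .z u v]

/-- The forbidden pair `(a,b)` of the `j`-th forbidding path of a gadget: a
`(1,2)`-, `(3,1)`-forbidding path from `u` to `x_uv`, a `(2,3)`-forbidding path from `u`
to `y_uv`, a `(2,1)`-, `(3,2)`-forbidding path from `v` to `x_uv`, a `(1,3)`-forbidding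
path from `v` to `y_uv`, a `(4,1)`-forbidding path from `x_uv` to `z_uv`, and a
`(4,2)`-forbidding path from `y_uv` to `z_uv`. -/
def fpPair : Fin 8 → ℕ × ℕ :=
  ![(1, 2), (3, 1), (2, 3), (2, 1), (3, 2), (1, 3), (4, 1), (4, 2)]

/-- Base (asymmetric) adjacency relation of `G'`: direct edges `u x_uv`, `u y_uv`;
the edges of the forbidding paths; all edges among `{a,b,c,d}` except `cd`;
and all edges from `Z` to `c`. -/
def NPRel {N : ℕ} (G : SimpleGraph (Fin N)) : NPV N → NPV N → Prop := fun w w' =>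
  (∃ u v, OEdge G u v ∧ w = .orig u ∧ (w' = .x u v ∨ w' = .y u v)) ∨
  (∃ u v j, OEdge G u v ∧ w = fpStart u v j ∧ w' = .p j u v 0) ∨
  (∃ u v j, ∃ s s' : Fin 5, OEdge G u v ∧ s'.val = s.val + 1 ∧
    w = .p j u v s ∧ w' = .p j u v s') ∨
  (∃ u v j, OEdge G u v ∧ w = .p j u v 4 ∧ w' = fpEnd u v j) ∨
  (w = .A ∧ (w' = .B ∨ w' = .C ∨ w' = .D)) ∨
  (w = .B ∧ (w' = .C ∨ w' = .D)) ∨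
  (∃ u v, OEdge G u v ∧ w = .z u v ∧ w' = .C)

/-- The graph `G'` of the NP-hardness construction. -/
def NPGraph {N : ℕ} (G : SimpleGraph (Fin N)) : SimpleGraph (NPV N) where
  Adj w w' := w ≠ w' ∧ (NPRel G w w' ∨ NPRel G w' w)
  symm := ⟨fun w w' h => ⟨h.1.symm, h.2.symm⟩⟩
  loopless := ⟨fun w h => h.1 rfl⟩

/-- The list assignment of `G'`, given the (arbitrary) lists `Lp` on the internal
vertices of the forbidding paths: `L(u) = {1,2,3}` for original vertices,
`L(x_uv) = {1,2,4}`, `L(y_uv) = {3,4}`, `L(z_uv) = {1,2,4}`, `L(a) = {1,2,3}`,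
`L(b) = {1,2}`, `L(c) = {3,4}`, `L(d) = {4}`. -/
def NPLists {N : ℕ} (Lp : Fin 8 → Fin N → Fin N → Fin 5 → Finset ℕ) :
    NPV N → Finset ℕ
  | .orig _ => {1, 2, 3}
  | .x _ _ => {1, 2, 4}
  | .y _ _ => {3, 4}
  | .z _ _ => {1, 2, 4}
  | .p j u v s => Lp j u v s
  | .A => {1, 2, 3}
  | .B => {1, 2}
  | .C => {3, 4}
  | .D => {4}

/-- The lists along the `j`-th forbidding path of the gadget of edge `uv`, viewed as a
standalone path of length six. -/
def gadgetPathLists {N : ℕ} (Lp : Fin 8 → Fin N → Fin N → Fin 5 → Finset ℕ)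
    (j : Fin 8) (u v : Fin N) : Fin 7 → Finset ℕ :=
  ![NPLists Lp (fpStart u v j), Lp j u v 0, Lp j u v 1, Lp j u v 2, Lp j u v 3,
    Lp j u v 4, NPLists Lp (fpEnd u v j)]

/-- The internal lists `Lp` are a valid choice for the construction: each gadget path is
an `(a,b)`-forbidding path of length six for its prescribed pair `(a,b)`. -/
def NPGoodLists {N : ℕ} (G : SimpleGraph (Fin N))
    (Lp : Fin 8 → Fin N → Fin N → Fin 5 → Finset ℕ) : Prop :=
  ∀ u v, OEdge G u v → ∀ j : Fin 8,
    IsForbiddingPath (gadgetPathLists Lp j u v) (fpPair j).1 (fpPair j).2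

/-
Since `a` and `b` are adjacent and `b` only has the colors `1, 2`, the swap of their colors
forces `a` to take the color `3` at some moment `t`. Then `c` has color `4`, so no `z_uv` has
color `4`, and at time `t` every gadget, read through its forbidding paths, forbids
`u` and `v` to share a color. The colors of the original vertices at time `t` therefore
form a proper 3-coloring of `G`.
-/

theorem IsLRecolSeq.exists_color_ne_of_swap {V : Type*} {G : SimpleGraph V}
    {L : V → Finset ℕ} {seq : ℕ → V → ℕ} {ℓ : ℕ} {α β : V → ℕ}
    (hseq : IsLRecolSeq G L seq ℓ α β) {a b : V} (hab : G.Adj a b) {x y : ℕ}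
    (hLb : L b ⊆ {x, y}) (hαa : α a = x) (hαb : α b = y) (hβa : β a ≠ x) :
    ∃ t ≤ ℓ, seq t a ≠ x ∧ seq t a ≠ y := by
  obtain ⟨h0, hℓ, hcol, hone⟩ := hseq
  by_contra! hstay
  have hconst : ∀ t ≤ ℓ, seq t a = x ∧ seq t b = y := by
    intro t
    induction t with
    | zero => intro _; rw [h0]; exact ⟨hαa, hαb⟩
    | succ t ih =>
      intro ht
      obtain ⟨iha, ihb⟩ := ih (by omega)
      have hne : seq (t + 1) a ≠ seq (t + 1) b := (hcol (t + 1) ht).2 a b hab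
      have hb : seq (t + 1) b = x ∨ seq (t + 1) b = y := by
        simpa using hLb ((hcol (t + 1) ht).1 b)
      have ha := hstay (t + 1) ht
      by_cases hfix : seq t a = seq (t + 1) a
      · omega
      · have hfixb : seq t b = seq (t + 1) b := by
          by_contra hfixb
          exact hab.ne (hone t (by omega) a b hfix hfixb)
        omega
  exact hβa (hℓ ▸ (hconst ℓ le_rfl).1)

theorem SimpleGraph.colorable_card_of_forall_mem {V : Type*} {G : SimpleGraph V}
    (s : Finset ℕ) (f : V → ℕ) (hf : ∀ v, f v ∈ s) (hadj : ∀ u v, G.Adj u v → f u ≠ f v) :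
    G.Colorable s.card := by
  simpa using (SimpleGraph.Coloring.mk (fun v => (⟨f v, hf v⟩ : s))
    fun h hfuv => hadj _ _ h (congrArg Subtype.val hfuv)).colorable

namespace NPGraph

variable {N : ℕ} {G : SimpleGraph (Fin N)} {u v : Fin N}

def gadgetPath (j : Fin 8) (u v : Fin N) : Fin 7 → NPV N :=
  ![fpStart u v j, .p j u v 0, .p j u v 1, .p j u v 2, .p j u v 3, .p j u v 4, fpEnd u v j]

theorem lists_gadgetPath (Lp : Fin 8 → Fin N → Fin N → Fin 5 → Finset ℕ) (j : Fin 8)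
    (u v : Fin N) (i : Fin 7) :
    NPLists Lp (gadgetPath j u v i) = gadgetPathLists Lp j u v i := by
  fin_cases i <;> rfl

theorem fpStart_ne_p (u v : Fin N) (j j' : Fin 8) (u' v' : Fin N) (s : Fin 5) :
    fpStart u v j ≠ .p j' u' v' s := by
  fin_cases j <;> exact fun h => nomatch h

theorem fpEnd_ne_p (u v : Fin N) (j j' : Fin 8) (u' v' : Fin N) (s : Fin 5) :
    fpEnd u v j ≠ .p j' u' v' s := by
  fin_cases j <;> exact fun h => nomatch h

theorem adj_gadgetPath_succ (h : OEdge G u v) (j : Fin 8) (k : ℕ) (hk : k < 6) :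
    (NPGraph G).Adj (gadgetPath j u v ⟨k, by omega⟩) (gadgetPath j u v ⟨k + 1, by omega⟩) := by
  have adj_p (s s' : Fin 5) (hs : s'.val = s.val + 1) :
      (NPGraph G).Adj (.p j u v s) (.p j u v s') :=
    ⟨by simp; omega, .inl <| .inr <| .inr <| .inl ⟨u, v, j, s, s', h, hs, rfl, rfl⟩⟩
  interval_cases k
  · exact ⟨fpStart_ne_p u v j j u v 0, .inl <| .inr <| .inl ⟨u, v, j, h, rfl, rfl⟩⟩
  · exact adj_p 0 1 rfl
  · exact adj_p 1 2 rfl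
  · exact adj_p 2 3 rfl
  · exact adj_p 3 4 rfl
  · exact ⟨(fpEnd_ne_p u v j j u v 4).symm, .inl <| .inr <| .inr <| .inr <| .inl
      ⟨u, v, j, h, rfl, rfl⟩⟩

theorem adj_gadgetPath (h : OEdge G u v) (j : Fin 8) {i i' : Fin 7} (hii' : PathG7.Adj i i') :
    (NPGraph G).Adj (gadgetPath j u v i) (gadgetPath j u v i') := by
  obtain ⟨k, hk⟩ := i
  obtain ⟨k', hk'⟩ := i'
  obtain rfl | rfl : k + 1 = k' ∨ k' + 1 = k := hii'
  · exact adj_gadgetPath_succ h j k (by omega)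
  · exact (adj_gadgetPath_succ h j k' (by omega)).symm

theorem adj_A_B : (NPGraph G).Adj .A .B :=
  ⟨by simp, .inl <| .inr <| .inr <| .inr <| .inr <| .inl ⟨rfl, .inl rfl⟩⟩

theorem adj_A_C : (NPGraph G).Adj .A .C :=
  ⟨by simp, .inl <| .inr <| .inr <| .inr <| .inr <| .inl ⟨rfl, .inr (.inl rfl)⟩⟩

theorem adj_z_C (h : OEdge G u v) : (NPGraph G).Adj (.z u v) .C :=
  ⟨by simp, .inl <| .inr <| .inr <| .inr <| .inr <| .inr <| .inr ⟨u, v, h, rfl, rfl⟩⟩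

theorem adj_orig_x (h : OEdge G u v) : (NPGraph G).Adj (.orig u) (.x u v) :=
  ⟨by simp, .inl <| .inl ⟨u, v, h, rfl, .inl rfl⟩⟩

theorem adj_orig_y (h : OEdge G u v) : (NPGraph G).Adj (.orig u) (.y u v) :=
  ⟨by simp, .inl <| .inl ⟨u, v, h, rfl, .inr rfl⟩⟩

end NPGraph

namespace IsLColoring

open NPGraph

variable {N : ℕ} {G : SimpleGraph (Fin N)} {Lp : Fin 8 → Fin N → Fin N → Fin 5 → Finset ℕ}
  {γ : NPV N → ℕ} {u v : Fin N}

theorem comp_gadgetPath (hγ : IsLColoring (NPGraph G) (NPLists Lp) γ) (h : OEdge G u v)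
    (j : Fin 8) : IsLColoring PathG7 (gadgetPathLists Lp j u v) (γ ∘ gadgetPath j u v) :=
  ⟨fun i => lists_gadgetPath Lp j u v i ▸ hγ.1 (gadgetPath j u v i),
   fun _ _ hii' => hγ.2 _ _ (adj_gadgetPath h j hii')⟩

theorem avoids_fpPair (hLp : NPGoodLists G Lp) (hγ : IsLColoring (NPGraph G) (NPLists Lp) γ)
    (h : OEdge G u v) (j : Fin 8) :
    γ (fpStart u v j) ≠ (fpPair j).1 ∨ γ (fpEnd u v j) ≠ (fpPair j).2 :=
  ((hLp u v h j).2.1 _ (hγ.1 _) _ (hγ.1 _)).mpr ⟨_, hγ.comp_gadgetPath h j, rfl, rfl⟩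

/- `z_uv ≠ 4` leaves two cases. If `z_uv = 1`, the `(4,1)`-path gives `x_uv ∈ {1,2}`, and the
paths into `x_uv` then exclude every common color of `u` and `v`; if `z_uv = 2`, the
`(4,2)`-path gives `y_uv = 3`, and the paths into `y_uv` do the same. -/
theorem orig_ne_of_oEdge (hLp : NPGoodLists G Lp) (hγ : IsLColoring (NPGraph G) (NPLists Lp) γ)
    (hC : γ .C = 4) (h : OEdge G u v) : γ (.orig u) ≠ γ (.orig v) := by
  have hz : γ (.z u v) ≠ γ .C := hγ.2 _ _ (adj_z_C h)
  have hux : γ (.orig u) ≠ γ (.x u v) := hγ.2 _ _ (adj_orig_x h)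
  have huy : γ (.orig u) ≠ γ (.y u v) := hγ.2 _ _ (adj_orig_y h)
  have f0 : γ (.orig u) ≠ 1 ∨ γ (.x u v) ≠ 2 := hγ.avoids_fpPair hLp h 0
  have f1 : γ (.orig u) ≠ 3 ∨ γ (.x u v) ≠ 1 := hγ.avoids_fpPair hLp h 1
  have f2 : γ (.orig u) ≠ 2 ∨ γ (.y u v) ≠ 3 := hγ.avoids_fpPair hLp h 2
  have f3 : γ (.orig v) ≠ 2 ∨ γ (.x u v) ≠ 1 := hγ.avoids_fpPair hLp h 3
  have f4 : γ (.orig v) ≠ 3 ∨ γ (.x u v) ≠ 2 := hγ.avoids_fpPair hLp h 4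
  have f5 : γ (.orig v) ≠ 1 ∨ γ (.y u v) ≠ 3 := hγ.avoids_fpPair hLp h 5
  have f6 : γ (.x u v) ≠ 4 ∨ γ (.z u v) ≠ 1 := hγ.avoids_fpPair hLp h 6
  have f7 : γ (.y u v) ≠ 4 ∨ γ (.z u v) ≠ 2 := hγ.avoids_fpPair hLp h 7
  have mu := hγ.1 (.orig u); have mv := hγ.1 (.orig v)
  have mx := hγ.1 (.x u v); have my := hγ.1 (.y u v); have mz := hγ.1 (.z u v)
  simp only [NPLists, Finset.mem_insert, Finset.mem_singleton] at mu mv mx my mz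
  omega

theorem orig_ne_of_adj (hLp : NPGoodLists G Lp) (hγ : IsLColoring (NPGraph G) (NPLists Lp) γ)
    (hC : γ .C = 4) (h : G.Adj u v) : γ (.orig u) ≠ γ (.orig v) := by
  rcases lt_or_gt_of_ne h.ne with hlt | hlt
  · exact hγ.orig_ne_of_oEdge hLp hC ⟨h, hlt⟩
  · exact (hγ.orig_ne_of_oEdge hLp hC ⟨h.symm, hlt⟩).symm

end IsLColoring

theorem stmt_16_general (N : ℕ) (G : SimpleGraph (Fin N))
    (Lp : Fin 8 → Fin N → Fin N → Fin 5 → Finset ℕ) (hLp : NPGoodLists G Lp)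
    (α : NPV N → ℕ)
    (hA : α .A = 1) (hB : α .B = 2)
    (ℓ : ℕ) (seq : ℕ → NPV N → ℕ)
    (hseq : IsLRecolSeq (NPGraph G) (NPLists Lp) seq ℓ α
      (Function.update (Function.update α .A 2) .B 1)) :
    G.Colorable 3 := by
  obtain ⟨t, ht, hA1, hA2⟩ := hseq.exists_color_ne_of_swap NPGraph.adj_A_B
    (by simp [NPLists]) hA hB (by simp)
  obtain ⟨-, -, hcol, -⟩ := hseq
  have hγ := hcol t ht
  have hC4 : seq t .C = 4 := by
    have hAC := hγ.2 _ _ NPGraph.adj_A_C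
    have mA := hγ.1 .A
    have mC := hγ.1 .C
    simp only [NPLists, Finset.mem_insert, Finset.mem_singleton] at mA mC
    omega
  exact SimpleGraph.colorable_card_of_forall_mem {1, 2, 3} (fun w => seq t (.orig w))
    (fun w => hγ.1 (.orig w)) fun _ _ h => hγ.orig_ne_of_adj hLp hC4 h

/-- Let `G'` with lists `L` and colorings `α`, `β` be obtained by the
NP-hardness construction from a graph `G` (with `α` as specified, extended in some fixed
way to the internal vertices of the forbidding paths, and `β` agreeing with `α`
everywhere except `β(a) = 2`, `β(b) = 1`). If there is an `L`-recoloring sequence for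
`G'` from `α` to `β` (of any length), then `G` is 3-colorable. -/
theorem stmt_16 (N : ℕ) (G : SimpleGraph (Fin N))
    (Lp : Fin 8 → Fin N → Fin N → Fin 5 → Finset ℕ) (hLp : NPGoodLists G Lp)
    (α : NPV N → ℕ) (hα : IsLColoring (NPGraph G) (NPLists Lp) α)
    (hαorig : ∀ w : Fin N, α (.orig w) = 1)
    (hαgadget : ∀ u v : Fin N, OEdge G u v →
      α (.x u v) = 4 ∧ α (.y u v) = 4 ∧ α (.z u v) = 4)
    (hA : α .A = 1) (hB : α .B = 2) (hC : α .C = 3) (hD : α .D = 4)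
    (ℓ : ℕ) (seq : ℕ → NPV N → ℕ)
    (hseq : IsLRecolSeq (NPGraph G) (NPLists Lp) seq ℓ α
      (Function.update (Function.update α .A 2) .B 1)) :
    G.Colorable 3 :=
  stmt_16_general N G Lp hLp α hA hB ℓ seq hseq
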